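/- arXiv:1711.05473 — 3 statements merged into one kernel-verified Lean document; each statement's English description precedes it below -/
import Mathlib

section
/- Suppose a finite hypergraph H on n vertices admits, for every induced subhypergraph (obtained by restricting to a subset of vertices and keeping the traces of hyperedges that remain of size at least 2), a proper coloring with at most c ≥ 2 colors. Then H admits a conflict-free coloring with O(log n) colors; more precisely, with at most ⌈log_{c/(c-1)} n⌉ + 1 colors. -/
/-!
Colour a largest colour class `M` of a proper `c`-colouring of `H[S]` with `0`, and colour
`S \ M` recursively with all colours shifted up by one. A hyperedge meeting `S \ M` keeps the
uniquely coloured vertex given by the recursion, since `0` differs from every shifted colour; a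
hyperedge whose trace on `S` lies in `M` meets `S` in at most one vertex, because `M` is
independent in `H[S]`. Each round keeps at most a `(c - 1) / c` fraction of `S`, so after
`⌈log_{c/(c-1)} n⌉` rounds at most one vertex is left, and it is coloured trivially.
-/

open Finset

section ConflictFree

variable {V α : Type*}

def HasUniqueColor (φ : V → α) (s : Finset V) : Prop :=
  ∃ v ∈ s, ∀ u ∈ s, u ≠ v → φ u ≠ φ v

theorem hasUniqueColor_of_card_le_one {s : Finset V} (hs : s.Nonempty) (h : #s ≤ 1)
    (φ : V → α) : HasUniqueColor φ s := by
  obtain ⟨v, hv⟩ := hs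
  exact ⟨v, hv, fun u hu huv => absurd (card_le_one.mp h u hu v hv) huv⟩

theorem exists_card_le_mul_card_filter_eq [Fintype α] [Nonempty α] [DecidableEq α]
    (φ : V → α) (S : Finset V) : ∃ j, #S ≤ Fintype.card α * #{x ∈ S | φ x = j} := by
  obtain ⟨j, -, hj⟩ := exists_max_image univ (fun j => #{x ∈ S | φ x = j}) univ_nonempty
  refine ⟨j, ?_⟩
  calc #S = ∑ i, #{x ∈ S | φ x = i} := card_eq_sum_card_fiberwise fun x _ => mem_univ (φ x)
    _ ≤ ∑ _i : α, #{x ∈ S | φ x = j} := sum_le_sum fun i _ => hj i (mem_univ i)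
    _ = Fintype.card α * #{x ∈ S | φ x = j} := by simp

variable [DecidableEq V]

/- The traces `e ∩ S` with at least two vertices are the edges of the induced subhypergraph
`H[S]`; the notions below are the usual ones for `H[S]`. -/
def IsProperOn (H : Set (Finset V)) (S : Finset V) (φ : V → α) : Prop :=
  ∀ e ∈ H, 2 ≤ #(e ∩ S) → ∃ u ∈ e ∩ S, ∃ v ∈ e ∩ S, φ u ≠ φ v

def IsIndepOn (H : Set (Finset V)) (S M : Finset V) : Prop :=
  ∀ e ∈ H, 2 ≤ #(e ∩ S) → ¬e ∩ S ⊆ M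

def IsConflictFreeOn (H : Set (Finset V)) (S : Finset V) (φ : V → α) : Prop :=
  ∀ e ∈ H, (e ∩ S).Nonempty → HasUniqueColor φ (e ∩ S)

variable {H : Set (Finset V)} {S M : Finset V}

theorem isConflictFreeOn_of_card_le_one (h : #S ≤ 1) (φ : V → α) : IsConflictFreeOn H S φ :=
  fun _ _ he => hasUniqueColor_of_card_le_one he ((card_le_card inter_subset_right).trans h) φ

theorem IsProperOn.isIndepOn_filter [DecidableEq α] {φ : V → α} (hφ : IsProperOn H S φ)
    (j : α) : IsIndepOn H S {x ∈ S | φ x = j} := by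
  intro e he h2 hsub
  obtain ⟨u, hu, v, hv, huv⟩ := hφ e he h2
  exact huv ((mem_filter.mp (hsub hu)).2.trans (mem_filter.mp (hsub hv)).2.symm)

theorem IsConflictFreeOn.of_sdiff {ψ : V → ℕ} (hM : IsIndepOn H S M)
    (hψ : IsConflictFreeOn H (S \ M) ψ) :
    IsConflictFreeOn H S (fun v => if v ∈ M then 0 else ψ v + 1) := by
  intro e he hne
  by_cases hout : (e ∩ (S \ M)).Nonempty
  · obtain ⟨v, hv, hvu⟩ := hψ e he hout
    simp only [mem_inter, mem_sdiff] at hv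
    refine ⟨v, mem_inter.mpr ⟨hv.1, hv.2.1⟩, fun u hu huv => ?_⟩
    by_cases huM : u ∈ M
    · simp [huM, hv.2.2]
    · have := hvu u (by simp_all) huv
      simp [huM, hv.2.2, this]
  · have hsub : e ∩ S ⊆ M := fun x hx => by
      by_contra hxM
      obtain ⟨hxe, hxS⟩ := mem_inter.mp hx
      exact hout ⟨x, mem_inter.mpr ⟨hxe, mem_sdiff.mpr ⟨hxS, hxM⟩⟩⟩
    exact hasUniqueColor_of_card_le_one hne (Nat.le_of_lt_succ (not_le.mp (hM e he · hsub))) _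

theorem exists_isConflictFreeOn_of_peeling {b : ℝ} (hb : 0 < b)
    (hpeel : ∀ S : Finset V, ∃ M, IsIndepOn H S M ∧ b * #(S \ M) ≤ #S) :
    ∀ (k : ℕ) (S : Finset V), (#S : ℝ) ≤ b ^ k →
      ∃ φ : V → ℕ, (∀ v ∈ S, φ v ≤ k) ∧ IsConflictFreeOn H S φ := by
  intro k
  induction k with
  | zero =>
    intro S hS
    exact ⟨0, fun _ _ => le_rfl, isConflictFreeOn_of_card_le_one (by simpa using hS) _⟩
  | succ k ih =>
    intro S hS
    obtain ⟨M, hM, hMcard⟩ := hpeel S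
    have hrest : (#(S \ M) : ℝ) ≤ b ^ k := by
      rw [pow_succ'] at hS
      exact le_of_mul_le_mul_left (hMcard.trans hS) hb
    obtain ⟨ψ, hψk, hψ⟩ := ih (S \ M) hrest
    refine ⟨fun v => if v ∈ M then 0 else ψ v + 1, fun v hv => ?_, hψ.of_sdiff hM⟩
    by_cases hvM : v ∈ M
    · simp [hvM]
    · simpa [hvM] using hψk v (mem_sdiff.mpr ⟨hv, hvM⟩)

/-- `M` is a largest colour class of a proper `c`-colouring of `S`. -/
theorem exists_isIndepOn_of_isProperOn {c : ℕ} (hc : 2 ≤ c)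
    (hprop : ∀ S : Finset V, ∃ φ : V → Fin c, IsProperOn H S φ) (S : Finset V) :
    ∃ M, IsIndepOn H S M ∧ (c / (c - 1) : ℝ) * #(S \ M) ≤ #S := by
  obtain ⟨φ, hφ⟩ := hprop S
  have : Nonempty (Fin c) := ⟨⟨0, by omega⟩⟩
  obtain ⟨j, hj⟩ := exists_card_le_mul_card_filter_eq φ S
  refine ⟨_, hφ.isIndepOn_filter j, ?_⟩
  have hc1 : (0 : ℝ) < c - 1 := by
    have : (2 : ℝ) ≤ c := by exact_mod_cast hc
    linarith
  have hj' : (#S : ℝ) ≤ c * #{x ∈ S | φ x = j} := by exact_mod_cast (Fintype.card_fin c ▸ hj)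
  rw [card_sdiff_of_subset (filter_subset _ S), Nat.cast_sub (card_le_card (filter_subset _ S)),
    div_mul_eq_mul_div, div_le_iff₀ hc1]
  linarith

theorem le_pow_natCeil_logb {b x : ℝ} (hb : 1 < b) (hx : 0 ≤ x) : x ≤ b ^ ⌈Real.logb b x⌉₊ := by
  rcases hx.eq_or_lt with rfl | hx
  · positivity
  calc x = b ^ Real.logb b x := (Real.rpow_logb (zero_lt_one.trans hb) hb.ne' hx).symm
    _ ≤ b ^ (⌈Real.logb b x⌉₊ : ℝ) := Real.rpow_le_rpow_of_exponent_le hb.le (Nat.le_ceil _)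
    _ = b ^ ⌈Real.logb b x⌉₊ := Real.rpow_natCast b _

end ConflictFree

/-- Smorodinsky's framework: if every induced subhypergraph of a finite hypergraph `H`
on `n` vertices admits a proper coloring with `c ≥ 2` colors, then `H` admits a
conflict-free coloring with at most `⌈log_{c/(c-1)} n⌉ + 1` colors. -/
theorem conflict_free_from_proper {V : Type*} [Fintype V] [DecidableEq V]
    (H : Set (Finset V)) (hH : ∀ e ∈ H, 2 ≤ e.card) (c : ℕ) (hc : 2 ≤ c)
    (hprop : ∀ S : Finset V, ∃ φ : V → Fin c,
      ∀ e ∈ H, 2 ≤ (e ∩ S).card → ∃ u ∈ e ∩ S, ∃ v ∈ e ∩ S, φ u ≠ φ v) :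
    ∃ φ : V → Fin (⌈Real.logb ((c : ℝ) / ((c : ℝ) - 1)) (Fintype.card V)⌉₊ + 1),
      ∀ e ∈ H, ∃ v ∈ e, ∀ u ∈ e, u ≠ v → φ u ≠ φ v := by
  have hbase : (1 : ℝ) < c / (c - 1) := by
    have : (2 : ℝ) ≤ c := by exact_mod_cast hc
    rw [one_lt_div (by linarith)]
    linarith
  obtain ⟨φ, hφk, hφ⟩ := exists_isConflictFreeOn_of_peeling (zero_lt_one.trans hbase)
    (exists_isIndepOn_of_isProperOn hc hprop) _ univ
    (le_pow_natCeil_logb hbase (Nat.cast_nonneg _))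
  refine ⟨fun v => ⟨φ v, Nat.lt_succ_of_le (hφk v (mem_univ v))⟩, fun e he => ?_⟩
  have hne : (e ∩ univ).Nonempty := by
    rw [inter_univ, ← card_pos]
    linarith [hH e he]
  obtain ⟨v, hv, hvu⟩ := hφ e he hne
  rw [inter_univ] at hv hvu
  exact ⟨v, hv, fun u hu huv h => hvu u hu huv (Fin.mk.inj_iff.mp h)⟩
end

section
/- (Abstract Clarkson–Shor counting) Let B be a finite family of n objects and let T be a finite set of 'k-deep configurations', where each configuration t ∈ T is determined by a set D(t) of at most 3 'defining' objects of B and a set K(t) of at most k 'killing' objects of B disjoint from D(t), such that t appears on the boundary structure of a subfamily B' ⊆ B whenever D(t) ⊆ B' and K(t) ∩ B' = ∅. Assume the map t ↦ (D(t)) is injective on configurations appearing in any fixed subfamily, and that for every subfamily B' ⊆ B the number of configurations appearing in B' is at most c|B'|. Then |T| ≤ c · 2^{k+3} · n. -/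
/-!
Double count the pairs `(t, S)` with `S ⊆ B` and `t` surviving in `S`. A configuration survives
in exactly the sets between `D t` and `B \ K t`, that is in at least `2 ^ n / 2 ^ (k + 3)` of the
`2 ^ n` subsets of `B`, while each subset `S` contributes at most `c * #S ≤ c * n` surviving
configurations.
-/

open Finset

namespace Finset

variable {β : Type*} [DecidableEq β]

theorem filter_powerset_subset_inter_eq_empty_eq_Icc (B D K : Finset β) :
    B.powerset.filter (fun S => D ⊆ S ∧ K ∩ S = ∅) = Icc D (B \ K) := by
  ext S
  simp only [mem_filter, mem_powerset, mem_Icc, subset_sdiff, ← disjoint_iff_inter_eq_empty,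
    disjoint_comm (a := K)]
  tauto

theorem two_pow_card_le_mul_card_filter_powerset {B D K : Finset β} (hDB : D ⊆ B)
    (hDK : Disjoint D K) :
    2 ^ #B ≤ 2 ^ (#D + #K) * #(B.powerset.filter fun S => D ⊆ S ∧ K ∩ S = ∅) := by
  have hD : D ⊆ B \ K := subset_sdiff.mpr ⟨hDB, hDK⟩
  rw [filter_powerset_subset_inter_eq_empty_eq_Icc, card_Icc_finset hD, ← pow_add]
  have := card_le_card hD
  have := le_card_sdiff K B
  exact Nat.pow_le_pow_right two_pos (by omega)

end Finset

open scoped Classical in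
/-- Abstract Clarkson–Shor counting: if each configuration `t` has at most 3 defining
objects `D t` and at most `k` killing objects `K t` (disjoint from `D t`) among `n`
objects, and for every subfamily `S` the number of configurations appearing in `S`
(i.e. with `D t ⊆ S` and `K t ∩ S = ∅`) is at most `c·|S|`, then the total number of
configurations is at most `c · 2^(k+3) · n`. -/
theorem clarkson_shor_counting {β τ : Type*} [DecidableEq β]
    (B : Finset β) (n : ℕ) (hn : B.card = n) (T : Finset τ)
    (D K : τ → Finset β) (k : ℕ) (c : ℝ) (hc : 0 ≤ c)
    (hD : ∀ t ∈ T, D t ⊆ B ∧ (D t).card ≤ 3)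
    (hK : ∀ t ∈ T, K t ⊆ B ∧ (K t).card ≤ k)
    (hdisj : ∀ t ∈ T, Disjoint (D t) (K t))
    (hcount : ∀ S ⊆ B,
      ((T.filter fun t => D t ⊆ S ∧ K t ∩ S = ∅).card : ℝ) ≤ c * S.card) :
    (T.card : ℝ) ≤ c * 2 ^ (k + 3) * n := by
  subst hn
  have hsurvive : ∀ t ∈ T, (2 : ℝ) ^ #B / 2 ^ (k + 3) ≤
      #(B.powerset.bipartiteAbove (fun t S => D t ⊆ S ∧ K t ∩ S = ∅) t) := by
    intro t ht
    rw [div_le_iff₀' (by positivity)]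
    have hle := two_pow_card_le_mul_card_filter_powerset (hD t ht).1 (hdisj t ht)
    have hexp : #(D t) + #(K t) ≤ k + 3 := by linarith [(hD t ht).2, (hK t ht).2]
    calc (2 : ℝ) ^ #B ≤ 2 ^ (#(D t) + #(K t)) * #(B.powerset.filter _) := by exact_mod_cast hle
      _ ≤ _ := mul_le_mul_of_nonneg_right (pow_le_pow_right₀ one_le_two hexp) (by positivity)
  have hsparse : ∀ S ∈ B.powerset,
      (#(T.bipartiteBelow (fun t S => D t ⊆ S ∧ K t ∩ S = ∅) S) : ℝ) ≤ c * #B := fun S hS =>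
    (hcount S (mem_powerset.mp hS)).trans (by gcongr; exact mem_powerset.mp hS)
  have hdouble := card_nsmul_le_card_nsmul _ hsurvive hsparse
  rw [card_powerset, nsmul_eq_mul, nsmul_eq_mul, mul_div_assoc', div_le_iff₀ (by positivity)]
    at hdouble
  push_cast at hdouble
  exact le_of_mul_le_mul_right (hdouble.trans_eq (by ring)) (by positivity)
end

section
/- Let n ≥ 3 points be placed evenly on a circle of radius 2 centered at the origin o in the plane. For each pair {i,j} let F_{ij} be the union of a disk of radius 1 + (in+j)ε centered at o with the ε'-neighborhoods (ε' = (in+j)ε) of the segments from o to p_i and from o to p_j. Then for all sufficiently small ε > 0, the region F_{ij} contains p_i and p_j but no other of the n points; consequently the intersection (here incidence) hypergraph of the point set with respect to the family {F_{ij}} contains all 2-element subsets as hyperedges, i.e., its Delaunay-graph is the complete graph K_n. -/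
open Real

/-- `n` points placed evenly on the circle of radius 2 around the origin
(identifying the plane with `ℂ`). -/
noncomputable def evenPt (n : ℕ) (k : Fin n) : ℂ :=
  2 * Complex.exp ((2 * Real.pi * (k : ℕ) / n : ℝ) * Complex.I)

/-- The region `F_{ij}`: the union of the disk of radius `1 + (in+j)ε` around the
origin with the `(in+j)ε`-neighborhoods of the segments from the origin to `p_i`
and to `p_j`. -/
noncomputable def bearEars (n : ℕ) (i j : Fin n) (ε : ℝ) : Set ℂ :=
  Metric.closedBall 0 (1 + ((i : ℕ) * n + (j : ℕ)) * ε) ∪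
    Metric.cthickening (((i : ℕ) * n + (j : ℕ)) * ε) (segment ℝ 0 (evenPt n i)) ∪
    Metric.cthickening (((i : ℕ) * n + (j : ℕ)) * ε) (segment ℝ 0 (evenPt n j))

open Filter Topology

/-! Every `p_k` has norm `2`, so it misses the disk of radius `1 + δ` once `δ < 1`; and a point of
the segment `[0, p_l]` with the same norm as `p_l` is `p_l` itself, so `p_k` lies at positive
distance from `[0, p_l]` for `k ≠ l`, hence outside its `δ`-thickening for small `δ`. With finitely
many pairs and `δ = (in+j)ε → 0` as `ε → 0`, all these conditions hold for small `ε`. -/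

theorem eq_of_mem_segment_zero_of_norm_eq {E : Type*} [NormedAddCommGroup E] [NormedSpace ℝ E]
    {x y : E} (hx : x ∈ segment ℝ 0 y) (h : ‖x‖ = ‖y‖) : x = y := by
  obtain ⟨t, ⟨ht0, -⟩, rfl⟩ : ∃ t ∈ Set.Icc (0 : ℝ) 1, t • y = x := by
    simpa [segment_eq_image] using hx
  rcases eq_or_ne y 0 with rfl | hy
  · simp
  have ht1 : t = 1 := by
    rw [norm_smul, Real.norm_of_nonneg ht0] at h
    exact (mul_eq_right₀ (norm_ne_zero_iff.2 hy)).1 h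
  rw [ht1, one_smul]

theorem isClosed_segment {E : Type*} [AddCommGroup E] [Module ℝ E] [TopologicalSpace E]
    [IsTopologicalAddGroup E] [ContinuousSMul ℝ E] [T2Space E] (x y : E) :
    IsClosed (segment ℝ x y) :=
  convexHull_pair (𝕜 := ℝ) x y ▸ (Set.toFinite {x, y}).isClosed_convexHull ℝ

theorem norm_evenPt (n : ℕ) (k : Fin n) : ‖evenPt n k‖ = 2 := by
  rw [evenPt, norm_mul, Complex.norm_exp_ofReal_mul_I]
  norm_num

theorem evenPt_eq_two_mul_pow (n : ℕ) (k : Fin n) :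
    evenPt n k = 2 * Complex.exp (2 * π * Complex.I / n) ^ (k : ℕ) := by
  rw [evenPt, ← Complex.exp_nat_mul]
  push_cast
  ring_nf

theorem evenPt_injective (n : ℕ) : Function.Injective (evenPt n) := by
  rcases n.eq_zero_or_pos with rfl | hn
  · exact fun k => k.elim0
  intro k l h
  rw [evenPt_eq_two_mul_pow, evenPt_eq_two_mul_pow, mul_right_inj' two_ne_zero] at h
  exact Fin.ext ((Complex.isPrimitiveRoot_exp n hn.ne').pow_inj k.isLt l.isLt h)

theorem evenPt_notMem_segment {n : ℕ} {k l : Fin n} (h : k ≠ l) :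
    evenPt n k ∉ segment ℝ 0 (evenPt n l) := fun hk =>
  h (evenPt_injective n (eq_of_mem_segment_zero_of_norm_eq hk (by rw [norm_evenPt, norm_evenPt])))

theorem eventually_evenPt_notMem_cthickening_segment (n : ℕ) :
    ∀ᶠ δ in 𝓝 (0 : ℝ), ∀ k l : Fin n, k ≠ l →
      evenPt n k ∉ Metric.cthickening δ (segment ℝ 0 (evenPt n l)) := by
  refine eventually_all.2 fun k => eventually_all.2 fun l => ?_
  rcases eq_or_ne k l with rfl | h
  · simp
  have hk : evenPt n k ∉ closure (segment ℝ 0 (evenPt n l)) := by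
    rw [(isClosed_segment _ _).closure_eq]
    exact evenPt_notMem_segment h
  filter_upwards [Metric.eventually_notMem_cthickening_of_infEDist_pos hk] with δ hδ _ using hδ

theorem setOf_evenPt_mem_bearEars {n : ℕ} {i j : Fin n} {ε : ℝ}
    (h1 : ((i : ℕ) * n + (j : ℕ)) * ε < 1)
    (hsep : ∀ k l : Fin n, k ≠ l →
      evenPt n k ∉ Metric.cthickening (((i : ℕ) * n + (j : ℕ)) * ε) (segment ℝ 0 (evenPt n l))) :
    {k : Fin n | evenPt n k ∈ bearEars n i j ε} = {i, j} := by
  ext k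
  simp only [bearEars, Set.mem_ofPred_eq, Set.mem_union, Metric.mem_closedBall, dist_zero_right,
    norm_evenPt, Set.mem_insert_iff, Set.mem_singleton_iff]
  constructor
  · rintro ((hball | hi) | hj)
    · linarith
    · by_contra! hk
      exact hsep k i hk.1 hi
    · by_contra! hk
      exact hsep k j hk.2 hj
  · rintro (rfl | rfl)
    · exact Or.inl (Or.inr (Metric.self_subset_cthickening _ (right_mem_segment ℝ 0 _)))
    · exact Or.inr (Metric.self_subset_cthickening _ (right_mem_segment ℝ 0 _))

theorem bearEars_contains_exactly_two_general (n : ℕ) :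
    ∃ ε₀ > (0 : ℝ), ∀ ε : ℝ, 0 < ε → ε ≤ ε₀ → ∀ i j : Fin n, i ≠ j →
      {k : Fin n | evenPt n k ∈ bearEars n i j ε} = {i, j} := by
  have hgood : ∀ᶠ ε in 𝓝[>] (0 : ℝ), ∀ i j : Fin n,
      {k : Fin n | evenPt n k ∈ bearEars n i j ε} = {i, j} := by
    refine eventually_all.2 fun i => eventually_all.2 fun j => ?_
    have hscale : Tendsto (fun ε : ℝ => ((i : ℕ) * n + (j : ℕ)) * ε) (𝓝 0) (𝓝 0) := by
      simpa using (tendsto_id (x := 𝓝 (0 : ℝ))).const_mul (((i : ℕ) * n + (j : ℕ) : ℝ))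
    refine nhdsWithin_le_nhds ?_
    filter_upwards [hscale.eventually (eventually_lt_nhds one_pos),
      hscale.eventually (eventually_evenPt_notMem_cthickening_segment n)] with ε h1 hsep
    exact setOf_evenPt_mem_bearEars h1 hsep
  obtain ⟨ε₀, hε₀, hsub⟩ := mem_nhdsGT_iff_exists_Ioc_subset.1 hgood
  exact ⟨ε₀, hε₀, fun ε hε hεle i j _ => hsub ⟨hε, hεle⟩ i j⟩

/-- For all sufficiently small `ε > 0`, each region `F_{ij}` contains exactly the two
points `p_i` and `p_j` among the `n` points evenly placed on a circle of radius 2;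
hence the Delaunay-graph of the point set with respect to the family `{F_{ij}}` is
the complete graph `K_n`. -/
theorem bearEars_contains_exactly_two (n : ℕ) (hn : 3 ≤ n) :
    ∃ ε₀ > (0 : ℝ), ∀ ε : ℝ, 0 < ε → ε ≤ ε₀ → ∀ i j : Fin n, i ≠ j →
      {k : Fin n | evenPt n k ∈ bearEars n i j ε} = {i, j} :=
  bearEars_contains_exactly_two_general n
end
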